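/- Let q be a complex number with 0 < |q| < 1, and let a be a nonzero complex number with |a| < 1. Then ∑_{n=0}^{∞} (2n+1)·(q/a;q)_n·a^n/(a;q)_{n+1} = (q;q)_∞^3·(a^2;q)_∞/(a;q)_∞^4. -/

import Mathlib

/-- The finite q-Pochhammer symbol `(a;q)_n = ∏_{k=0}^{n-1} (1 - a q^k)`. -/
noncomputable def qPoch (a q : ℂ) (n : ℕ) : ℂ := ∏ k ∈ Finset.range n, (1 - a * q ^ k)

/-- The infinite q-Pochhammer symbol `(a;q)_∞ = ∏_{k=0}^{∞} (1 - a q^k)`. -/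
noncomputable def qPochInf (a q : ℂ) : ℂ := ∏' k : ℕ, (1 - a * q ^ k)

/-!
Write `S(b) = ∑ (2n+1) (q/b;q)_n b^n / (b;q)_{n+1}`. The partial sums of
`(1-b)^3 S(b) - (1+b)(1-b^2 q) S(bq)` telescope to a remainder that tends to `0`, which gives the
functional equation `(1-b)^3 S(b) = (1+b)(1-b^2 q) S(bq)`. Iterating it,
`(b;q)_k^4 S(b) = (b^2;q)_{2k} S(bq^k)`, and since `S` is continuous at `0` (dominated convergence),
`k → ∞` gives `(b;q)_∞^4 S(b) = (b^2;q)_∞ S(0)`. At `b = q` only the first term of `S` survives,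
`S(q) = 1/(1-q)`, and this identifies `S(0) = (q;q)_∞^3` (Jacobi's identity).
-/

open Finset Filter Topology

section QPochhammer

variable {a q : ℂ}

lemma qPoch_succ (a q : ℂ) (n : ℕ) : qPoch a q (n + 1) = qPoch a q n * (1 - a * q ^ n) :=
  prod_range_succ _ _

lemma qPoch_succ' (a q : ℂ) (n : ℕ) : qPoch a q (n + 1) = (1 - a) * qPoch (a * q) q n := by
  simp only [qPoch, prod_range_succ', pow_zero, mul_one, mul_assoc, ← pow_succ']
  exact mul_comm _ _

lemma qPoch_div_mul_pow (ha : a ≠ 0) (n : ℕ) :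
    qPoch (q / a) q n * a ^ n = ∏ k ∈ range n, (a - q ^ (k + 1)) := by
  rw [qPoch, pow_eq_prod_const, ← prod_mul_distrib]
  refine prod_congr rfl fun k _ => ?_
  field_simp
  ring

lemma norm_mul_pow_le (a : ℂ) (hq : ‖q‖ ≤ 1) (k : ℕ) : ‖a * q ^ k‖ ≤ ‖a‖ := by
  rw [norm_mul, norm_pow]
  exact mul_le_of_le_one_right (norm_nonneg a) (pow_le_one₀ (norm_nonneg q) hq)

lemma one_sub_mul_pow_ne_zero (ha : ‖a‖ < 1) (hq : ‖q‖ ≤ 1) (k : ℕ) : 1 - a * q ^ k ≠ 0 := by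
  intro h
  have := (norm_mul_pow_le a hq k).trans_lt ha
  rw [← sub_eq_zero.mp h, norm_one] at this
  exact lt_irrefl _ this

lemma qPoch_ne_zero (ha : ‖a‖ < 1) (hq : ‖q‖ ≤ 1) (n : ℕ) : qPoch a q n ≠ 0 :=
  prod_ne_zero_iff.mpr fun k _ => one_sub_mul_pow_ne_zero ha hq k

lemma summable_norm_neg_mul_pow (a : ℂ) (hq : ‖q‖ < 1) :
    Summable fun k : ℕ => ‖-(a * q ^ k)‖ := by
  simpa [norm_mul, norm_pow] using
    (summable_geometric_of_lt_one (norm_nonneg q) hq).mul_left ‖a‖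

lemma tendsto_qPoch (a : ℂ) (hq : ‖q‖ < 1) : Tendsto (qPoch a q) atTop (𝓝 (qPochInf a q)) := by
  have := (multipliable_one_add_of_summable (summable_norm_neg_mul_pow a hq)).tendsto_prod_tprod_nat
  simp only [← sub_eq_add_neg] at this
  exact this

lemma qPochInf_ne_zero (ha : ‖a‖ < 1) (hq : ‖q‖ < 1) : qPochInf a q ≠ 0 := by
  simpa [qPochInf, ← sub_eq_add_neg] using tprod_one_add_ne_zero_of_summable
    (fun k => by simpa [← sub_eq_add_neg] using one_sub_mul_pow_ne_zero ha hq.le k)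
    (summable_norm_neg_mul_pow a hq)

lemma qPochInf_eq_one_sub_mul (a : ℂ) (hq : ‖q‖ < 1) :
    qPochInf a q = (1 - a) * qPochInf (a * q) q :=
  tendsto_nhds_unique ((tendsto_qPoch a hq).comp (tendsto_add_atTop_nat 1))
    (((tendsto_qPoch (a * q) hq).const_mul (1 - a)).congr fun n => (qPoch_succ' a q n).symm)

end QPochhammer

section Bounds

variable {q : ℂ}

lemma norm_qPochInf_le_norm_qPoch {b : ℂ} {r : ℝ} (hbr : ‖b‖ ≤ r) (hr : r < 1) (hq : ‖q‖ < 1)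
    (n : ℕ) : ‖qPochInf r ‖q‖‖ ≤ ‖qPoch b q n‖ := by
  have hr0 : 0 ≤ r := (norm_nonneg b).trans hbr
  have hle : ∀ k : ℕ, r * ‖q‖ ^ k ≤ r := fun k =>
    mul_le_of_le_one_right hr0 (pow_le_one₀ (norm_nonneg q) hq.le)
  have hfactor : ∀ k : ℕ, ‖1 - (r : ℂ) * (‖q‖ : ℂ) ^ k‖ = 1 - r * ‖q‖ ^ k := fun k => by
    rw [← Complex.norm_of_nonneg (by linarith [hle k] : 0 ≤ 1 - r * ‖q‖ ^ k)]
    push_cast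
    rfl
  have hanti : Antitone fun n => ‖qPoch r ‖q‖ n‖ := antitone_nat_of_succ_le fun n => by
    rw [qPoch_succ, norm_mul, hfactor]
    exact mul_le_of_le_one_right (norm_nonneg _) (sub_le_self _ (by positivity))
  calc ‖qPochInf r ‖q‖‖
      ≤ ‖qPoch r ‖q‖ n‖ := hanti.le_of_tendsto (tendsto_qPoch _ (by simpa using hq)).norm n
    _ = ∏ k ∈ range n, (1 - r * ‖q‖ ^ k) := by simp only [qPoch, norm_prod, hfactor]
    _ ≤ ∏ k ∈ range n, ‖1 - b * q ^ k‖ := by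
        refine prod_le_prod (fun k _ => by linarith [hle k]) fun k _ => ?_
        have hbq : ‖b * q ^ k‖ ≤ r * ‖q‖ ^ k := by
          rw [norm_mul, norm_pow]
          exact mul_le_mul_of_nonneg_right hbr (by positivity)
        have := norm_sub_norm_le (1 : ℂ) (b * q ^ k)
        rw [norm_one] at this
        linarith
    _ = ‖qPoch b q n‖ := (norm_prod _ _).symm

lemma norm_prod_sub_pow_le {b : ℂ} {r : ℝ} (hbr : ‖b‖ ≤ r) (hr : 0 < r) (hq : ‖q‖ < 1)
    (n : ℕ) :
    ‖∏ k ∈ range n, (b - q ^ (k + 1))‖ ≤ Real.exp ((1 - ‖q‖)⁻¹ / r) * r ^ n := by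
  calc ‖∏ k ∈ range n, (b - q ^ (k + 1))‖
      ≤ ∏ k ∈ range n, (r * (1 + ‖q‖ ^ k / r)) := by
        rw [norm_prod]
        refine prod_le_prod (fun k _ => norm_nonneg _) fun k _ => ?_
        calc ‖b - q ^ (k + 1)‖ ≤ ‖b‖ + ‖q‖ ^ (k + 1) := by
              simpa only [norm_pow] using norm_sub_le b (q ^ (k + 1))
          _ ≤ r + ‖q‖ ^ k := add_le_add hbr (pow_le_pow_of_le_one (norm_nonneg q) hq.le k.le_succ)
          _ = r * (1 + ‖q‖ ^ k / r) := by field_simp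
    _ = r ^ n * ∏ k ∈ range n, (1 + ‖q‖ ^ k / r) := by
        rw [prod_mul_distrib, prod_const, card_range]
    _ ≤ r ^ n * Real.exp (∑ k ∈ range n, ‖q‖ ^ k / r) := by
        gcongr
        exact Real.prod_one_add_le_exp_sum _ fun k => by positivity
    _ ≤ Real.exp ((1 - ‖q‖)⁻¹ / r) * r ^ n := by
        rw [mul_comm, ← sum_div, ← tsum_geometric_of_lt_one (norm_nonneg q) hq]
        gcongr
        exact Summable.sum_le_tsum _ (fun k _ => by positivity)
          (summable_geometric_of_lt_one (norm_nonneg q) hq)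

end Bounds

/-- `b ^ n (q/b;q)_n / (b;q)_{n+1}`, with the numerator expanded as a polynomial in `b` so that
the term also makes sense at `b = 0`. -/
noncomputable def qTerm (q b : ℂ) (n : ℕ) : ℂ :=
  (∏ k ∈ range n, (b - q ^ (k + 1))) / qPoch b q (n + 1)

noncomputable def qSeries (q b : ℂ) : ℂ := ∑' n : ℕ, (2 * (n : ℂ) + 1) * qTerm q b n

section QSeries

variable {q b : ℂ}

lemma norm_two_mul_add_one (n : ℕ) : ‖2 * (n : ℂ) + 1‖ = 2 * n + 1 := by
  exact_mod_cast Complex.norm_natCast (2 * n + 1)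

lemma summable_two_mul_add_one_mul_pow {r : ℝ} (hr0 : 0 ≤ r) (hr1 : r < 1) :
    Summable fun n : ℕ => (2 * n + 1) * r ^ n := by
  have hlin : Summable fun n : ℕ => (n : ℝ) * r ^ n := by
    simpa using summable_pow_mul_geometric_of_norm_lt_one 1
      (by rwa [Real.norm_of_nonneg hr0] : ‖r‖ < 1)
  refine ((hlin.mul_left 2).add (summable_geometric_of_lt_one hr0 hr1)).congr fun n => ?_
  ring

lemma exists_norm_qTerm_le (hq : ‖q‖ < 1) {r : ℝ} (hr0 : 0 < r) (hr1 : r < 1) :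
    ∃ C, ∀ b : ℂ, ‖b‖ ≤ r → ∀ n, ‖qTerm q b n‖ ≤ C * r ^ n := by
  have hc : 0 < ‖qPochInf r ‖q‖‖ := norm_pos_iff.mpr <| qPochInf_ne_zero
    (by rwa [Complex.norm_of_nonneg hr0.le]) (by simpa using hq)
  refine ⟨Real.exp ((1 - ‖q‖)⁻¹ / r) / ‖qPochInf r ‖q‖‖, fun b hb n => ?_⟩
  rw [qTerm, norm_div, div_mul_eq_mul_div]
  exact div_le_div₀ (by positivity) (norm_prod_sub_pow_le hb hr0 hq n) hc
    (norm_qPochInf_le_norm_qPoch hb hr1 hq (n + 1))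

lemma norm_qSeries_term_le {C r : ℝ} (hC : ∀ b : ℂ, ‖b‖ ≤ r → ∀ n, ‖qTerm q b n‖ ≤ C * r ^ n)
    (hb : ‖b‖ ≤ r) (n : ℕ) :
    ‖(2 * (n : ℂ) + 1) * qTerm q b n‖ ≤ C * ((2 * n + 1) * r ^ n) := by
  rw [norm_mul, norm_two_mul_add_one, mul_left_comm]
  exact mul_le_mul_of_nonneg_left (hC b hb n) (by positivity)

lemma summable_qSeries (hq : ‖q‖ < 1) (hb : ‖b‖ < 1) :
    Summable fun n : ℕ => (2 * (n : ℂ) + 1) * qTerm q b n := by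
  obtain ⟨r, hbr, hr1⟩ := exists_between hb
  have hr0 : 0 < r := (norm_nonneg b).trans_lt hbr
  obtain ⟨C, hC⟩ := exists_norm_qTerm_le hq hr0 hr1
  exact .of_norm_bounded ((summable_two_mul_add_one_mul_pow hr0.le hr1).mul_left C)
    (norm_qSeries_term_le hC hbr.le)

lemma continuousAt_qTerm (hq : ‖q‖ < 1) (hb : ‖b‖ < 1) (n : ℕ) :
    ContinuousAt (fun b => qTerm q b n) b := by
  refine ContinuousAt.div (by fun_prop) ?_ (qPoch_ne_zero hb hq.le _)
  simp only [qPoch]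
  fun_prop

lemma continuousAt_qSeries (hq : ‖q‖ < 1) (hb : ‖b‖ < 1) : ContinuousAt (qSeries q) b := by
  obtain ⟨r, hbr, hr1⟩ := exists_between hb
  have hr0 : 0 < r := (norm_nonneg b).trans_lt hbr
  obtain ⟨C, hC⟩ := exists_norm_qTerm_le hq hr0 hr1
  refine tendsto_tsum_of_dominated_convergence
    ((summable_two_mul_add_one_mul_pow hr0.le hr1).mul_left C)
    (fun n => ((continuousAt_qTerm hq hb n).const_mul _).tendsto) ?_
  filter_upwards [continuous_norm.continuousAt.eventually_lt continuousAt_const hbr] with b' hb'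
  exact norm_qSeries_term_le hC hb'.le

end QSeries

section FunctionalEquation

variable {q b : ℂ}

lemma qTerm_zero (q b : ℂ) : qTerm q b 0 = (1 - b)⁻¹ := by
  simp [qTerm, qPoch]

lemma qTerm_succ (q b : ℂ) (n : ℕ) :
    qTerm q b (n + 1) = qTerm q b n * ((b - q ^ (n + 1)) / (1 - b * q ^ (n + 1))) := by
  rw [qTerm, qTerm, prod_range_succ, qPoch_succ _ _ (n + 1), div_mul_div_comm]

lemma prod_mul_sub_pow_succ (q b : ℂ) (n : ℕ) :
    ∏ k ∈ range (n + 1), (b * q - q ^ (k + 1))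
      = q ^ (n + 1) * (b - 1) * ∏ k ∈ range n, (b - q ^ (k + 1)) := by
  have hfactor : ∀ k : ℕ, b * q - q ^ (k + 1) = q * (b - q ^ k) := fun k => by ring
  simp only [hfactor, prod_mul_distrib, prod_const, card_range, prod_range_succ' _ n, pow_zero]
  ring

lemma qTerm_mul_succ (hq : ‖q‖ < 1) (hb : ‖b‖ < 1) (n : ℕ) :
    qTerm q (b * q) (n + 1) = -q ^ (n + 1) * (1 - b) ^ 2 * qTerm q b n
      / ((1 - b * q ^ (n + 1)) * (1 - b * q ^ (n + 2))) := by
  have hne := one_sub_mul_pow_ne_zero hb hq.le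
  have h1 : 1 - b ≠ 0 := by simpa using hne 0
  have hden : qPoch (b * q) q (n + 2) = qPoch b q (n + 3) / (1 - b) := by
    rw [qPoch_succ' b q (n + 2), mul_div_cancel_left₀ _ h1]
  rw [qTerm, qTerm, prod_mul_sub_pow_succ, hden, qPoch_succ _ _ (n + 2), qPoch_succ _ _ (n + 1)]
  field_simp [qPoch_ne_zero hb hq.le (n + 1), hne (n + 1), hne (n + 2)]
  ring

/-- The partial sums of `(1 - b)^3 S(b) - (1 + b) (1 - b^2 q) S(bq)` telescope to this. -/
noncomputable def qSeriesRemainder (q b : ℂ) : ℕ → ℂ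
  | 0 => 0
  | n + 1 => -b * (1 - b) * ((1 - b) * (1 + q ^ (n + 1)) * ((2 * n + 1) * qTerm q b n)
      / (1 - b * q ^ (n + 1)) + 2 * qTerm q b n)

lemma qSeriesRemainder_succ_sub (hq : ‖q‖ < 1) (hb : ‖b‖ < 1) (n : ℕ) :
    qSeriesRemainder q b (n + 1) - qSeriesRemainder q b n
      = (1 - b) ^ 3 * ((2 * n + 1) * qTerm q b n)
        - (1 + b) * (1 - b ^ 2 * q) * ((2 * n + 1) * qTerm q (b * q) n) := by
  have hne := one_sub_mul_pow_ne_zero hb hq.le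
  have h1 : 1 - b ≠ 0 := by simpa using hne 0
  cases n with
  | zero =>
    have hbq : 1 - b * q ≠ 0 := by simpa using hne 1
    simp only [qSeriesRemainder, qTerm_zero, Nat.cast_zero, zero_add, pow_one, mul_zero]
    field_simp
    ring
  | succ n =>
    rw [qTerm_mul_succ hq hb]
    simp only [qSeriesRemainder, qTerm_succ]
    push_cast
    field_simp [hne (n + 1), hne (n + 2)]
    ring

lemma tendsto_qSeriesRemainder (hq : ‖q‖ < 1) (hb : ‖b‖ < 1) :
    Tendsto (qSeriesRemainder q b) atTop (𝓝 0) := by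
  rw [← tendsto_add_atTop_iff_nat 1]
  have hu := (summable_qSeries hq hb).tendsto_atTop_zero
  have hv : Tendsto (qTerm q b) atTop (𝓝 0) := squeeze_zero_norm (fun n => by
    rw [norm_mul, norm_two_mul_add_one]
    exact le_mul_of_one_le_left (norm_nonneg _) (by linarith [n.cast_nonneg (α := ℝ)]))
    (tendsto_zero_iff_norm_tendsto_zero.mp hu)
  have hx : Tendsto (fun n : ℕ => q ^ (n + 1)) atTop (𝓝 0) :=
    (tendsto_pow_atTop_nhds_zero_of_norm_lt_one hq).comp (tendsto_add_atTop_nat 1)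
  have hlim : Tendsto (fun n => qSeriesRemainder q b (n + 1)) atTop
      (𝓝 (-b * (1 - b) * ((1 - b) * (1 + 0) * 0 / (1 - b * 0) + 2 * 0))) :=
    tendsto_const_nhds.mul <|
      (((tendsto_const_nhds.mul (tendsto_const_nhds.add hx)).mul hu).div
        (tendsto_const_nhds.sub (tendsto_const_nhds.mul hx)) (by simp)).add
      (tendsto_const_nhds.mul hv)
  simpa using hlim

theorem one_sub_pow_three_mul_qSeries (hq : ‖q‖ < 1) (hb : ‖b‖ < 1) :
    (1 - b) ^ 3 * qSeries q b = (1 + b) * (1 - b ^ 2 * q) * qSeries q (b * q) := by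
  have hbq : ‖b * q‖ < 1 := by simpa using (norm_mul_pow_le b hq.le 1).trans_lt hb
  have hpartial : ∀ N, (1 - b) ^ 3 * ∑ n ∈ range N, (2 * (n : ℂ) + 1) * qTerm q b n
      - (1 + b) * (1 - b ^ 2 * q) * ∑ n ∈ range N, (2 * (n : ℂ) + 1) * qTerm q (b * q) n
      = qSeriesRemainder q b N := fun N => by
    rw [mul_sum, mul_sum, ← sum_sub_distrib]
    simp only [← qSeriesRemainder_succ_sub hq hb]
    rw [sum_range_sub]
    exact sub_zero _
  have hlim := ((summable_qSeries hq hb).hasSum.tendsto_sum_nat.const_mul ((1 - b) ^ 3)).sub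
    ((summable_qSeries hq hbq).hasSum.tendsto_sum_nat.const_mul ((1 + b) * (1 - b ^ 2 * q)))
  exact sub_eq_zero.mp <| tendsto_nhds_unique hlim <|
    (tendsto_qSeriesRemainder hq hb).congr fun N => (hpartial N).symm

end FunctionalEquation

section Evaluation

variable {q b : ℂ}

lemma qPoch_pow_four_mul_qSeries (hq : ‖q‖ < 1) (hb : ‖b‖ < 1) (k : ℕ) :
    qPoch b q k ^ 4 * qSeries q b = qPoch (b ^ 2) q (2 * k) * qSeries q (b * q ^ k) := by
  induction k with
  | zero => simp [qPoch]
  | succ k ih =>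
    have hfe := one_sub_pow_three_mul_qSeries hq ((norm_mul_pow_le b hq.le k).trans_lt hb)
    rw [show b * q ^ k * q = b * q ^ (k + 1) by ring] at hfe
    rw [qPoch_succ, show 2 * (k + 1) = 2 * k + 1 + 1 by ring, qPoch_succ, qPoch_succ]
    linear_combination (1 - b * q ^ k) ^ 4 * ih
      + qPoch (b ^ 2) q (2 * k) * (1 - b * q ^ k) * hfe

theorem qPochInf_pow_four_mul_qSeries (hq : ‖q‖ < 1) (hb : ‖b‖ < 1) :
    qPochInf b q ^ 4 * qSeries q b = qPochInf (b ^ 2) q * qSeries q 0 := by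
  have hbqk : Tendsto (fun k => b * q ^ k) atTop (𝓝 0) := by
    simpa using (tendsto_pow_atTop_nhds_zero_of_norm_lt_one hq).const_mul b
  have htwo : Tendsto (fun k : ℕ => 2 * k) atTop atTop :=
    tendsto_atTop_mono (fun k => by simp only [id_eq]; omega) tendsto_id
  have hright := ((tendsto_qPoch (b ^ 2) hq).comp htwo).mul
    ((continuousAt_qSeries hq (by simp)).tendsto.comp hbqk)
  refine tendsto_nhds_unique (((tendsto_qPoch b hq).pow 4).mul_const _) (hright.congr fun k => ?_)
  exact (qPoch_pow_four_mul_qSeries hq hb k).symm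

lemma qSeries_self (q : ℂ) : qSeries q q = (1 - q)⁻¹ := by
  rw [qSeries, tsum_eq_single 0 fun n hn => ?_]
  · simp [qTerm_zero]
  obtain ⟨m, rfl⟩ := Nat.exists_eq_succ_of_ne_zero hn
  simp [qTerm, prod_range_succ']

theorem qSeries_zero (hq : ‖q‖ < 1) : qSeries q 0 = qPochInf q q ^ 3 := by
  have hq2 : ‖q ^ 2‖ < 1 := by
    rw [norm_pow]
    exact pow_lt_one₀ (norm_nonneg q) hq two_ne_zero
  have h1 : 1 - q ≠ 0 := by simpa using one_sub_mul_pow_ne_zero hq hq.le 0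
  have h := qPochInf_pow_four_mul_qSeries hq hq
  rw [qSeries_self] at h
  rw [qPochInf_eq_one_sub_mul q hq, ← sq] at h ⊢
  refine mul_left_cancel₀ (qPochInf_ne_zero hq2 hq) ?_
  rw [← h]
  field_simp

end Evaluation

theorem stmt10_general (q a : ℂ) (hq1 : ‖q‖ < 1)
    (ha0 : a ≠ 0) (ha : ‖a‖ < 1) :
    ∑' n : ℕ, (2 * (n : ℂ) + 1) * qPoch (q / a) q n * a ^ n / qPoch a q (n + 1) =
      qPochInf q q ^ 3 * qPochInf (a ^ 2) q / qPochInf a q ^ 4 := by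
  have hseries : ∑' n : ℕ, (2 * (n : ℂ) + 1) * qPoch (q / a) q n * a ^ n / qPoch a q (n + 1)
      = qSeries q a :=
    tsum_congr fun n => by rw [qTerm, ← qPoch_div_mul_pow ha0]; ring
  rw [hseries, eq_div_iff (pow_ne_zero 4 (qPochInf_ne_zero ha hq1)), ← qSeries_zero hq1]
  linear_combination qPochInf_pow_four_mul_qSeries hq1 ha

theorem stmt10 (q a : ℂ) (hq0 : 0 < ‖q‖) (hq1 : ‖q‖ < 1)
    (ha0 : a ≠ 0) (ha : ‖a‖ < 1) :
    ∑' n : ℕ, (2 * (n : ℂ) + 1) * qPoch (q / a) q n * a ^ n / qPoch a q (n + 1) =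
      qPochInf q q ^ 3 * qPochInf (a ^ 2) q / qPochInf a q ^ 4 :=
  stmt10_general q a hq1 ha0 ha
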